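/- arXiv:1606.09365 — 3 statements merged into one kernel-verified Lean document; each statement's English description precedes it below -/
import Mathlib

section
/- Let f ∈ F_{μ,L}(ℝ^n) with 0 < μ < L, x* a global minimizer of f, f* = f(x*). The gradient method with fixed step length γ = 2/(μ+L), i.e., x_{i+1} = x_i - (2/(μ+L))∇f(x_i), satisfies f(x_{i+1}) - f* ≤ ((L-μ)/(L+μ))²(f(x_i) - f*) for all i ≥ 0. -/
/-!
Because `f - (μ/2)‖·‖²` is convex and `f` is `L`-smooth, the function `f - (μ/2)‖·‖²` is convex
with a quadratic upper bound of curvature `L - μ`. The usual co-coercivity argument for such a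
function gives, for all points `a`, `b`, the interpolation inequality
  `‖∇f a - ∇f b - μ(a - b)‖² ≤ 2(L - μ)(f a - f b - ⟪∇f b, a - b⟫ - (μ/2)‖a - b‖²)`.
For one gradient step `q = p - (2/(μ+L))∇f p`, the combination of the interpolation inequalities
for the pairs `(x*, q)`, `(p, q)`, `(x*, p)` with weights `2μ(μ+L)`, `(L-μ)(μ+L)`, `2μ(L-μ)`, plus
the square `‖(μ+L)(∇f p + ∇f q) - 2μL(p - x*)‖² ≥ 0`, is exactly `2(L-μ)` times the claimed bound.
-/

def SmoothStronglyConvex {n : ℕ} (μ L : ℝ) (f : EuclideanSpace ℝ (Fin n) → ℝ) : Prop :=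
  ContDiff ℝ 1 f ∧
  ConvexOn ℝ Set.univ (fun x => f x - μ / 2 * ‖x‖ ^ 2) ∧
  ∀ x y : EuclideanSpace ℝ (Fin n), ‖gradient f x - gradient f y‖ ≤ L * ‖x - y‖

open RealInnerProductSpace Set
open scoped Gradient

theorem ConvexOn.apply_add_fderiv_sub_le {E : Type*} [NormedAddCommGroup E] [NormedSpace ℝ E]
    {s : Set E} {g : E → ℝ} {g' : E →L[ℝ] ℝ} {u v : E} (hg : ConvexOn ℝ s g)
    (hu : u ∈ s) (hv : v ∈ s) (hg' : HasFDerivAt g g' v) :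
    g v + g' (u - v) ≤ g u := by
  let ℓ : ℝ →ᵃ[ℝ] E := AffineMap.lineMap v u
  have hd : HasDerivAt (g ∘ ℓ) (g' (u - v)) 0 :=
    (AffineMap.lineMap_apply_zero (k := ℝ) v u ▸ hg').comp_hasDerivAt 0
      AffineMap.hasDerivAt_lineMap
  have hslope := (hg.comp_affineMap ℓ).le_slope_of_hasDerivAt
    (x := 0) (y := 1) (by simpa [ℓ] using hv) (by simpa [ℓ] using hu) one_pos hd
  simp only [slope_def_field, Function.comp_apply, ℓ, AffineMap.lineMap_apply_zero,
    AffineMap.lineMap_apply_one, sub_zero, div_one] at hslope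
  linarith

section Calculus

variable {E : Type*} [NormedAddCommGroup E] [InnerProductSpace ℝ E] [CompleteSpace E]
  {f : E → ℝ}

theorem IsLocalMin.gradient_eq_zero {a : E} (h : IsLocalMin f a) : ∇ f a = 0 := by
  simp [gradient, h.fderiv_eq_zero]

theorem quadratic_lower_bound_of_convexOn_sub_sq {μ : ℝ}
    (hconv : ConvexOn ℝ univ (fun x => f x - μ / 2 * ‖x‖ ^ 2)) {v : E}
    (hf : DifferentiableAt ℝ f v) (u : E) :
    f v + ⟪∇ f v, u - v⟫ + μ / 2 * ‖u - v‖ ^ 2 ≤ f u := by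
  have hd := hf.hasFDerivAt.sub ((hasStrictFDerivAt_norm_sq v).hasFDerivAt.const_mul (μ / 2))
  have h := hconv.apply_add_fderiv_sub_le (mem_univ u) (mem_univ v) hd
  have hsq : ‖u‖ ^ 2 = ‖v‖ ^ 2 + 2 * ⟪v, u - v⟫ + ‖u - v‖ ^ 2 := by
    rw [← norm_add_sq_real, add_sub_cancel]
  simp only [_root_.sub_apply, _root_.smul_apply, innerSL_apply_apply,
    ← inner_gradient_left, nsmul_eq_mul, smul_eq_mul] at h
  rw [hsq, Nat.cast_ofNat] at h
  linarith

theorem quadratic_upper_bound_of_lipschitz_gradient {L : ℝ} (hf : Differentiable ℝ f)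
    (hlip : ∀ x y, ‖∇ f x - ∇ f y‖ ≤ L * ‖x - y‖) (u v : E) :
    f u ≤ f v + ⟪∇ f v, u - v⟫ + L / 2 * ‖u - v‖ ^ 2 := by
  set d := u - v
  have hline (t : ℝ) : HasDerivAt (fun t : ℝ => f (v + t • d)) ⟪∇ f (v + t • d), d⟫ t := by
    have hv : HasDerivAt (fun t : ℝ => v + t • d) d t := by
      simpa using ((hasDerivAt_id t).smul_const d).const_add v
    exact (hf _).hasGradientAt.hasFDerivAt.comp_hasDerivAt t hv
  have hbound (t : ℝ) : HasDerivAt (fun t : ℝ => f v + t * ⟪∇ f v, d⟫ + L / 2 * t ^ 2 * ‖d‖ ^ 2)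
      (⟪∇ f v, d⟫ + L * t * ‖d‖ ^ 2) t := by
    have := (((hasDerivAt_id' t).mul_const ⟪∇ f v, d⟫).const_add (f v)).fun_add
      (((hasDerivAt_pow 2 t).const_mul (L / 2)).mul_const (‖d‖ ^ 2))
    exact this.congr_deriv (by push_cast; ring)
  have hderiv_le (t : ℝ) (ht : t ∈ Ico (0 : ℝ) 1) :
      ⟪∇ f (v + t • d), d⟫ ≤ ⟪∇ f v, d⟫ + L * t * ‖d‖ ^ 2 :=
    calc ⟪∇ f (v + t • d), d⟫ = ⟪∇ f v, d⟫ + ⟪∇ f (v + t • d) - ∇ f v, d⟫ := by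
          rw [inner_sub_left]; ring
      _ ≤ ⟪∇ f v, d⟫ + ‖∇ f (v + t • d) - ∇ f v‖ * ‖d‖ := by
          gcongr; exact real_inner_le_norm _ _
      _ ≤ ⟪∇ f v, d⟫ + L * ‖t • d‖ * ‖d‖ := by
          gcongr; simpa using hlip (v + t • d) v
      _ = ⟪∇ f v, d⟫ + L * t * ‖d‖ ^ 2 := by
          rw [norm_smul, Real.norm_of_nonneg ht.1]; ring
  have key := image_le_of_deriv_right_le_deriv_boundary (a := 0) (b := 1)
    (fun t _ => (hline t).continuousAt.continuousWithinAt)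
    (fun t _ => (hline t).hasDerivWithinAt) (by simp)
    (fun t _ => (hbound t).continuousAt.continuousWithinAt)
    (fun t _ => (hbound t).hasDerivWithinAt) hderiv_le (right_mem_Icc.2 zero_le_one)
  simpa [d] using key

end Calculus

section Interpolation

variable {E : Type*} [NormedAddCommGroup E] [InnerProductSpace ℝ E] {G : E → E}

theorem sq_norm_sub_le_of_convex_quadratic_bounds {h : E → ℝ} {K : ℝ} (hK : 0 < K)
    (hlow : ∀ u v, h v + ⟪G v, u - v⟫ ≤ h u)
    (hup : ∀ u v, h u ≤ h v + ⟪G v, u - v⟫ + K / 2 * ‖u - v‖ ^ 2) (a b : E) :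
    ‖G a - G b‖ ^ 2 ≤ 2 * K * (h a - h b - ⟪G b, a - b⟫) := by
  set D := G a - G b
  -- `w` minimises the quadratic upper bound at `a` of `h - ⟪G b, ·⟫`
  set w := a - K⁻¹ • D
  have h₁ := hlow w b
  have h₂ := hup w a
  have hD : ⟪G a, D⟫ - ⟪G b, D⟫ = ‖D‖ ^ 2 := by
    rw [← inner_sub_left, real_inner_self_eq_norm_sq]
  have hwb : w - b = (a - b) - K⁻¹ • D := by simp only [w]; abel
  have hwa : w - a = -(K⁻¹ • D) := by simp only [w]; abel
  rw [hwb, inner_sub_right, real_inner_smul_right] at h₁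
  rw [hwa, inner_neg_right, real_inner_smul_right, norm_neg, norm_smul, mul_pow,
    Real.norm_of_nonneg (inv_nonneg.2 hK.le)] at h₂
  have hK' : K / 2 * (K⁻¹ ^ 2 * ‖D‖ ^ 2) = K⁻¹ / 2 * ‖D‖ ^ 2 := by field_simp
  have hgap : K⁻¹ / 2 * ‖D‖ ^ 2 ≤ h a - h b - ⟪G b, a - b⟫ := by
    linear_combination h₁ + h₂ - K⁻¹ * hD + hK'
  calc ‖D‖ ^ 2 = 2 * K * (K⁻¹ / 2 * ‖D‖ ^ 2) := by field_simp
    _ ≤ _ := by gcongr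

theorem interpolation_of_quadratic_bounds {f : E → ℝ} {μ L : ℝ} (hμL : μ < L)
    (hlow : ∀ u v, f v + ⟪G v, u - v⟫ + μ / 2 * ‖u - v‖ ^ 2 ≤ f u)
    (hup : ∀ u v, f u ≤ f v + ⟪G v, u - v⟫ + L / 2 * ‖u - v‖ ^ 2) (a b : E) :
    ‖G a - G b - μ • (a - b)‖ ^ 2
      ≤ 2 * (L - μ) * (f a - f b - ⟪G b, a - b⟫ - μ / 2 * ‖a - b‖ ^ 2) := by
  have hshift (u v : E) : (f v - μ / 2 * ‖v‖ ^ 2) + ⟪G v - μ • v, u - v⟫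
      = f v + ⟪G v, u - v⟫ + μ / 2 * ‖u - v‖ ^ 2 - μ / 2 * ‖u‖ ^ 2 := by
    have hsq := norm_add_sq_real v (u - v)
    rw [add_sub_cancel] at hsq
    rw [inner_sub_left, real_inner_smul_left, hsq]
    ring
  have key := sq_norm_sub_le_of_convex_quadratic_bounds (G := fun x => G x - μ • x)
    (h := fun x => f x - μ / 2 * ‖x‖ ^ 2) (K := L - μ) (sub_pos.2 hμL)
    (fun u v => by linarith [hshift u v, hlow u v])
    (fun u v => by linarith [hshift u v, hup u v]) a b
  have hG : G a - μ • a - (G b - μ • b) = G a - G b - μ • (a - b) := by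
    rw [smul_sub]; abel
  have hgap : f a - μ / 2 * ‖a‖ ^ 2 - (f b - μ / 2 * ‖b‖ ^ 2) - ⟪G b - μ • b, a - b⟫
      = f a - f b - ⟪G b, a - b⟫ - μ / 2 * ‖a - b‖ ^ 2 := by
    linarith [hshift a b]
  rwa [hG, hgap] at key

theorem gradient_step_contraction {f : E → ℝ} {μ L : ℝ} (hμ : 0 < μ) (hμL : μ < L)
    (hinterp : ∀ a b, ‖G a - G b - μ • (a - b)‖ ^ 2
      ≤ 2 * (L - μ) * (f a - f b - ⟪G b, a - b⟫ - μ / 2 * ‖a - b‖ ^ 2))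
    {s : E} (hs : G s = 0) (p : E) :
    f (p - (2 / (μ + L)) • G p) - f s ≤ ((L - μ) / (L + μ)) ^ 2 * (f p - f s) := by
  have hsum : 0 < μ + L := by linarith
  set q := p - (2 / (μ + L)) • G p
  have hGp : G p = ((μ + L) / 2) • (p - q) := by
    rw [sub_sub_cancel, smul_smul, div_mul_div_comm, mul_comm 2, div_self (by positivity),
      one_smul]
  have h₁ := hinterp s q
  have h₂ := hinterp p q
  have h₃ := hinterp s p
  have hres : 0 ≤ ‖(μ + L) • (G p + G q) - (2 * μ * L) • (p - s)‖ ^ 2 := sq_nonneg _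
  rw [hs] at h₁ h₃
  rw [hGp] at h₂ h₃ hres
  simp only [← real_inner_self_eq_norm_sq, inner_sub_left, inner_sub_right, inner_add_left,
    inner_add_right, real_inner_smul_left, real_inner_smul_right, zero_sub, inner_neg_left,
    inner_neg_right, real_inner_comm p q, real_inner_comm p s, real_inner_comm p (G q),
    real_inner_comm q s, real_inner_comm q (G q), real_inner_comm s (G q)] at h₁ h₂ h₃ hres
  have key : 2 * (L - μ) * ((L + μ) ^ 2 * (f q - f s))
      ≤ 2 * (L - μ) * ((L - μ) ^ 2 * (f p - f s)) := by
    linear_combination (2 * μ * (μ + L)) * h₁ + ((L - μ) * (μ + L)) * h₂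
      + (2 * μ * (L - μ)) * h₃ + hres
  rw [div_pow, div_mul_eq_mul_div, le_div_iff₀ (pow_pos (by linarith) 2)]
  linarith [le_of_mul_le_mul_left key (by positivity : 0 < 2 * (L - μ))]

end Interpolation

theorem stmt8 {n : ℕ} (μ L : ℝ) (hμ : 0 < μ) (hμL : μ < L)
    (f : EuclideanSpace ℝ (Fin n) → ℝ) (hf : SmoothStronglyConvex μ L f)
    (xstar : EuclideanSpace ℝ (Fin n)) (hmin : ∀ y, f xstar ≤ f y)
    (x : ℕ → EuclideanSpace ℝ (Fin n))
    (hiter : ∀ i : ℕ, x (i + 1) = x i - (2 / (μ + L)) • gradient f (x i)) :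
    ∀ i : ℕ, f (x (i + 1)) - f xstar ≤ ((L - μ) / (L + μ)) ^ 2 * (f (x i) - f xstar) := by
  obtain ⟨hsmooth, hconv, hlip⟩ := hf
  have hdiff : Differentiable ℝ f := hsmooth.differentiable one_ne_zero
  have hinterp := interpolation_of_quadratic_bounds hμL
    (fun u v => quadratic_lower_bound_of_convexOn_sub_sq hconv (hdiff v) u)
    (quadratic_upper_bound_of_lipschitz_gradient hdiff hlip)
  have hstar : ∇ f xstar = 0 := IsLocalMin.gradient_eq_zero (.of_forall hmin)
  intro i
  rw [hiter i]
  exact gradient_step_contraction hμ hμL hinterp hstar (x i)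
end

section
/- Let f ∈ F_{μ,L}(ℝ^n) with 0 < μ < L and let x₀,…,x_N be the iterates of gradient descent with exact line search applied to f. Then the data (x_i, f(x_i), ∇f(x_i)) for i ∈ {*,0,…,N} (where x* is the minimizer and ∇f(x*) = 0) is a feasible solution of the SDP performance estimation problem: it satisfies ∇f(x_{i+1})ᵀ(x_{i+1}-x_i) = 0 and ∇f(x_{i+1})ᵀ∇f(x_i) = 0 for all 0 ≤ i ≤ N-1, and all the F_{μ,L}-interpolation inequalities among the points. -/
/-! At an exact line-search step the derivative of `γ ↦ f (xᵢ - γ • ∇f xᵢ)` vanishes, which gives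
both orthogonality relations, and `∇f x⋆ = 0` at the minimizer. The interpolation inequality holds
for every pair of points: for `h = f - (μ/2)‖·‖²` the Bregman divergence `D_h(x, y)` lies between
`0` (convexity) and `(L - μ)/2 ‖x - y‖²` (descent lemma for `f`), and these two bounds alone force
`‖∇h x - ∇h y‖² ≤ 2 (L - μ) D_h(x, y)`; written out in terms of `f` this is the inequality. -/

open RealInnerProductSpace Set

/-- The `F_{μ,L}` interpolation inequality between points `xi` and `xj` for `f`. -/
def InterpPt {n : ℕ} (μ L : ℝ) (f : EuclideanSpace ℝ (Fin n) → ℝ)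
    (xi xj : EuclideanSpace ℝ (Fin n)) : Prop :=
  f xi - f xj - ⟪gradient f xj, xi - xj⟫ ≥ 1 / (2 * (1 - μ / L)) *
    ((1 / L) * ‖gradient f xi - gradient f xj‖ ^ 2 + μ * ‖xi - xj‖ ^ 2 -
      (2 * μ / L) * ⟪gradient f xj - gradient f xi, xj - xi⟫)

lemma sub_sub_deriv_le_of_deriv_sub_le {g g' : ℝ → ℝ} {C : ℝ}
    (hg : ∀ t, HasDerivAt g (g' t) t) (hC : ∀ t ∈ Ico (0 : ℝ) 1, g' t - g' 0 ≤ C * t) :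
    g 1 - g 0 - g' 0 ≤ C / 2 := by
  have hD : ∀ t, HasDerivAt (fun s => g s - g 0 - s * g' 0) (g' t - g' 0) t := fun t => by
    simpa using ((hg t).sub_const (g 0)).fun_sub ((hasDerivAt_id' t).mul_const (g' 0))
  have hB : ∀ t, HasDerivAt (fun s : ℝ => C / 2 * s ^ 2) (C * t) t := fun t =>
    ((hasDerivAt_pow 2 t).const_mul (C / 2)).congr_deriv (by ring)
  have := image_le_of_deriv_right_le_deriv_boundary (a := 0) (b := 1)
    (fun t _ => (hD t).continuousAt.continuousWithinAt) (fun t _ => (hD t).hasDerivWithinAt)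
    (by simp) (fun t _ => (hB t).continuousAt.continuousWithinAt)
    (fun t _ => (hB t).hasDerivWithinAt) hC (right_mem_Icc.2 zero_le_one)
  simpa using this

variable {E : Type*} [NormedAddCommGroup E] [InnerProductSpace ℝ E] [CompleteSpace E]

lemma HasGradientAt.hasDerivAt_comp_line {f : E → ℝ} {g a v : E} {t : ℝ}
    (hf : HasGradientAt f g (a + t • v)) :
    HasDerivAt (fun s : ℝ => f (a + s • v)) ⟪g, v⟫ t := by
  have hline : HasDerivAt (fun s : ℝ => a + s • v) v t := by
    simpa using ((hasDerivAt_id t).smul_const v).const_add a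
  simpa [Function.comp_def] using
    (hasGradientAt_iff_hasFDerivAt.1 hf).comp_hasDerivAt t hline

lemma inner_gradient_eq_zero_of_forall_le_line {f : E → ℝ} {x d : E} {γ : ℝ}
    (hγ : ∀ γ' : ℝ, f (x - γ • d) ≤ f (x - γ' • d)) (hf : DifferentiableAt ℝ f (x - γ • d)) :
    ⟪gradient f (x - γ • d), d⟫ = 0 := by
  have hline : HasDerivAt (fun s : ℝ => f (x + s • -d)) ⟪gradient f (x - γ • d), -d⟫ γ :=
    HasGradientAt.hasDerivAt_comp_line (by simpa [← sub_eq_add_neg] using hf.hasGradientAt)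
  simp only [smul_neg, ← sub_eq_add_neg, inner_neg_right] at hline
  have hmin : IsLocalMin (fun s : ℝ => f (x - s • d)) γ := Filter.Eventually.of_forall hγ
  exact neg_eq_zero.1 (hmin.hasDerivAt_eq_zero hline)

noncomputable def bregman (φ : E → ℝ) (x y : E) : ℝ := φ x - φ y - ⟪gradient φ y, x - y⟫

lemma ConvexOn.bregman_nonneg {φ : E → ℝ} {y : E} (hφ : ConvexOn ℝ univ φ)
    (hd : DifferentiableAt ℝ φ y) (x : E) : 0 ≤ bregman φ x y := by
  have hline : HasDerivAt (fun t : ℝ => φ (y + t • (x - y))) ⟪gradient φ y, x - y⟫ 0 :=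
    HasGradientAt.hasDerivAt_comp_line (by simpa using hd.hasGradientAt)
  have hconv : ConvexOn ℝ univ (fun t : ℝ => φ (y + t • (x - y))) := by
    simpa [Function.comp_def, AffineMap.lineMap_apply_module', add_comm] using
      hφ.comp_affineMap (AffineMap.lineMap y x)
  have := hconv.le_slope_of_hasDerivAt (mem_univ 0) (mem_univ 1) zero_lt_one hline
  simp only [slope_def_field, zero_smul, add_zero, one_smul, add_sub_cancel, sub_zero,
    div_one] at this
  unfold bregman
  linarith

lemma bregman_le_of_lipschitz_gradient {φ : E → ℝ} {K : ℝ} (hd : Differentiable ℝ φ)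
    (hK : ∀ a b, ‖gradient φ a - gradient φ b‖ ≤ K * ‖a - b‖) (x y : E) :
    bregman φ x y ≤ K / 2 * ‖x - y‖ ^ 2 := by
  have hline : ∀ t : ℝ, HasDerivAt (fun s : ℝ => φ (y + s • (x - y)))
      ⟪gradient φ (y + t • (x - y)), x - y⟫ t :=
    fun t => (hd _).hasGradientAt.hasDerivAt_comp_line
  have hbound : ∀ t ∈ Ico (0 : ℝ) 1, ⟪gradient φ (y + t • (x - y)), x - y⟫ -
      ⟪gradient φ (y + (0 : ℝ) • (x - y)), x - y⟫ ≤ K * ‖x - y‖ ^ 2 * t := by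
    intro t ht
    rw [zero_smul, add_zero, ← inner_sub_left]
    calc ⟪gradient φ (y + t • (x - y)) - gradient φ y, x - y⟫
        ≤ ‖gradient φ (y + t • (x - y)) - gradient φ y‖ * ‖x - y‖ := real_inner_le_norm _ _
      _ ≤ K * ‖t • (x - y)‖ * ‖x - y‖ := by
        gcongr; simpa using hK (y + t • (x - y)) y
      _ = K * ‖x - y‖ ^ 2 * t := by
        rw [norm_smul, Real.norm_of_nonneg ht.1]; ring
  have := sub_sub_deriv_le_of_deriv_sub_le hline hbound
  simp only [zero_smul, add_zero, one_smul, add_sub_cancel] at this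
  unfold bregman
  linarith

/-- Cocoercivity: test the upper bound between `w = x - K⁻¹ (∇φ x - ∇φ y)` and `x`, and the
lower bound between `w` and `y`. -/
lemma sq_norm_sub_gradient_le_bregman {φ : E → ℝ} {K : ℝ} (hK : 0 < K)
    (hlow : ∀ a b, 0 ≤ bregman φ a b) (hup : ∀ a b, bregman φ a b ≤ K / 2 * ‖a - b‖ ^ 2)
    (x y : E) :
    1 / (2 * K) * ‖gradient φ x - gradient φ y‖ ^ 2 ≤ bregman φ x y := by
  set d := gradient φ x - gradient φ y
  have hsplit : ∀ w, bregman φ x y = bregman φ w y - bregman φ w x - ⟪d, w - x⟫ := by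
    intro w
    simp only [bregman, d, inner_sub_left, inner_sub_right]
    ring
  have hstep : x - K⁻¹ • d - x = -(K⁻¹ • d) := by abel
  have hinner : ⟪d, x - K⁻¹ • d - x⟫ = -(K⁻¹ * ‖d‖ ^ 2) := by
    rw [hstep, inner_neg_right, real_inner_smul_right, real_inner_self_eq_norm_sq]
  have hnorm : K / 2 * ‖x - K⁻¹ • d - x‖ ^ 2 = K⁻¹ * ‖d‖ ^ 2 - 1 / (2 * K) * ‖d‖ ^ 2 := by
    rw [hstep, norm_neg, norm_smul, mul_pow, Real.norm_of_nonneg (inv_nonneg.2 hK.le)]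
    field_simp
    ring
  linarith [hsplit (x - K⁻¹ • d), hlow (x - K⁻¹ • d) y, hup (x - K⁻¹ • d) x]

lemma hasGradientAt_sub_half_mul_norm_sq {f : E → ℝ} {x : E} (μ : ℝ)
    (hf : DifferentiableAt ℝ f x) :
    HasGradientAt (fun z => f z - μ / 2 * ‖z‖ ^ 2) (gradient f x - μ • x) x := by
  rw [hasGradientAt_iff_hasFDerivAt]
  refine (hf.hasFDerivAt.sub ((hasStrictFDerivAt_norm_sq x).hasFDerivAt.const_smul (μ / 2))
    ).congr_fderiv ?_
  ext v
  simp only [sub_apply, smul_apply, coe_innerSL_apply,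
    gradient, LinearIsometryEquiv.apply_symm_apply, map_sub, map_smul,
    InnerProductSpace.toDual_apply_apply, smul_eq_mul, nsmul_eq_mul]
  ring

lemma bregman_sub_half_mul_norm_sq {f : E → ℝ} {y : E} (μ : ℝ) (hf : DifferentiableAt ℝ f y)
    (x : E) :
    bregman (fun z => f z - μ / 2 * ‖z‖ ^ 2) x y = bregman f x y - μ / 2 * ‖x - y‖ ^ 2 := by
  simp only [bregman, (hasGradientAt_sub_half_mul_norm_sq μ hf).gradient, inner_sub_left,
    real_inner_smul_left, norm_sub_sq_real, inner_sub_right, real_inner_self_eq_norm_sq,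
    real_inner_comm x y]
  ring

theorem interpolation_inequality {μ L : ℝ} (hμ : 0 < μ) (hμL : μ < L) {f : E → ℝ}
    (hf : Differentiable ℝ f) (hconv : ConvexOn ℝ univ (fun z => f z - μ / 2 * ‖z‖ ^ 2))
    (hlip : ∀ a b, ‖gradient f a - gradient f b‖ ≤ L * ‖a - b‖) (x y : E) :
    f x - f y - ⟪gradient f y, x - y⟫ ≥ 1 / (2 * (1 - μ / L)) *
      ((1 / L) * ‖gradient f x - gradient f y‖ ^ 2 + μ * ‖x - y‖ ^ 2 -
        (2 * μ / L) * ⟪gradient f y - gradient f x, y - x⟫) := by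
  set h : E → ℝ := fun z => f z - μ / 2 * ‖z‖ ^ 2
  have hgrad : ∀ z, gradient h z = gradient f z - μ • z := fun z =>
    (hasGradientAt_sub_half_mul_norm_sq μ (hf z)).gradient
  have hlow : ∀ a b, 0 ≤ bregman h a b := fun a b =>
    hconv.bregman_nonneg (hasGradientAt_sub_half_mul_norm_sq μ (hf b)).differentiableAt a
  have hup : ∀ a b, bregman h a b ≤ (L - μ) / 2 * ‖a - b‖ ^ 2 := fun a b => by
    rw [bregman_sub_half_mul_norm_sq μ (hf b)]
    linarith [bregman_le_of_lipschitz_gradient hf hlip a b]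
  have hcoco := sq_norm_sub_gradient_le_bregman (sub_pos.2 hμL) hlow hup x y
  have hnorm : ‖gradient h x - gradient h y‖ ^ 2 = ‖gradient f x - gradient f y‖ ^ 2 -
      2 * μ * ⟪gradient f y - gradient f x, y - x⟫ + μ ^ 2 * ‖x - y‖ ^ 2 := by
    rw [hgrad, hgrad, show gradient f x - μ • x - (gradient f y - μ • y) =
      (gradient f x - gradient f y) - μ • (x - y) by rw [smul_sub]; abel, norm_sub_sq_real,
      norm_smul, mul_pow, Real.norm_eq_abs, sq_abs, real_inner_smul_right,
      ← inner_neg_neg, neg_sub, neg_sub]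
    ring
  rw [hnorm, bregman_sub_half_mul_norm_sq μ (hf y)] at hcoco
  have hL : L ≠ 0 := (hμ.trans hμL).ne'
  have hLμ : L - μ ≠ 0 := (sub_pos.2 hμL).ne'
  have hcoef : ∀ sg sx ip : ℝ, 1 / (2 * (1 - μ / L)) * (1 / L * sg + μ * sx - 2 * μ / L * ip) =
      μ / 2 * sx + 1 / (2 * (L - μ)) * (sg - 2 * μ * ip + μ ^ 2 * sx) := by
    intro sg sx ip
    field_simp
    ring
  rw [ge_iff_le, hcoef]
  unfold bregman at hcoco
  linarith

theorem stmt15 {n : ℕ} (μ L : ℝ) (hμ : 0 < μ) (hμL : μ < L)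
    (f : EuclideanSpace ℝ (Fin n) → ℝ) (hf : SmoothStronglyConvex μ L f)
    (xstar : EuclideanSpace ℝ (Fin n)) (hmin : ∀ y, f xstar ≤ f y)
    (N : ℕ) (x : ℕ → EuclideanSpace ℝ (Fin n))
    (hiter : ∀ i : ℕ, i < N → ∃ γ : ℝ,
      (∀ γ' : ℝ, f (x i - γ • gradient f (x i)) ≤ f (x i - γ' • gradient f (x i))) ∧
      x (i + 1) = x i - γ • gradient f (x i)) :
    gradient f xstar = 0 ∧
    (∀ i : ℕ, i < N →
      ⟪gradient f (x (i + 1)), x (i + 1) - x i⟫ = 0 ∧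
      ⟪gradient f (x (i + 1)), gradient f (x i)⟫ = 0) ∧
    (∀ i j : ℕ, i ≤ N → j ≤ N → InterpPt μ L f (x i) (x j)) ∧
    (∀ i : ℕ, i ≤ N → InterpPt μ L f (x i) xstar ∧ InterpPt μ L f xstar (x i)) := by
  obtain ⟨hC1, hconv, hlip⟩ := hf
  have hdiff : Differentiable ℝ f := hC1.differentiable one_ne_zero
  have hinterp : ∀ a b, InterpPt μ L f a b :=
    interpolation_inequality hμ hμL hdiff hconv hlip
  refine ⟨?_, fun i hi => ?_, fun i j _ _ => hinterp _ _, fun i _ => ⟨hinterp _ _, hinterp _ _⟩⟩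
  · have hloc : IsLocalMin f xstar := Filter.Eventually.of_forall hmin
    rw [gradient, hloc.fderiv_eq_zero, map_zero]
  · obtain ⟨γ, hγ, hstep⟩ := hiter i hi
    have horth := inner_gradient_eq_zero_of_forall_le_line hγ (hdiff _)
    rw [hstep, sub_sub_cancel_left, inner_neg_right, real_inner_smul_right, horth, mul_zero, neg_zero]
    exact ⟨rfl, rfl⟩
end

section
/- Let f ∈ F_{μ,L}(ℝ^n) with 0 < μ < L. Then for any two points x, y ∈ ℝ^n: f(x) - f(y) - ⟨∇f(y), x - y⟩ ≥ (1/(2(1-μ/L)))((1/L)‖∇f(x)-∇f(y)‖² + μ‖x-y‖² - (2μ/L)⟨∇f(y)-∇f(x), y-x⟩). -/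
/-!
The function `h = f - μ/2 ‖·‖²` is convex, and the descent lemma for the `L`-Lipschitz gradient
of `f` turns into a quadratic upper bound for `h` with constant `L - μ`. For such an `h`, bounding
`h` from below at `y` and from above at `x` at the gradient step `x - (∇h x - ∇h y) / (L - μ)`
gives `h x - h y - ⟪∇h y, x - y⟫ ≥ ‖∇h x - ∇h y‖² / (2 (L - μ))`, and expanding `h` back in terms
of `f` is the claim.
-/

open RealInnerProductSpace

open Set

variable {E : Type*} [NormedAddCommGroup E] [InnerProductSpace ℝ E]

theorem half_mul_norm_sq_sub_sub_inner (μ : ℝ) (x y : E) :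
    μ / 2 * ‖y‖ ^ 2 - μ / 2 * ‖x‖ ^ 2 - ⟪μ • x, y - x⟫ = μ / 2 * ‖y - x‖ ^ 2 := by
  rw [real_inner_smul_left, inner_sub_right, real_inner_self_eq_norm_sq, norm_sub_sq_real,
    real_inner_comm]
  ring

theorem norm_sq_div_two_mul_le_of_convex_of_descent {h : E → ℝ} {g : E → E} {K : ℝ} (hK : 0 < K)
    (hconv : ∀ x y, h x + ⟪g x, y - x⟫ ≤ h y)
    (hdesc : ∀ x y, h y ≤ h x + ⟪g x, y - x⟫ + K / 2 * ‖y - x‖ ^ 2) (x y : E) :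
    ‖g x - g y‖ ^ 2 / (2 * K) ≤ h x - h y - ⟪g y, x - y⟫ := by
  set v := g x - g y
  -- a gradient step of length `1 / K` from `x` for the tilted function `h - ⟪g y, ·⟫`,
  -- which is minimised at `y`
  set w := x - K⁻¹ • v
  have hlow := hconv y w
  have hup := hdesc x w
  have hwx : w - x = -(K⁻¹ • v) := by simp [w]
  have hwy : w - y = (x - y) - K⁻¹ • v := by simp only [w]; abel
  rw [hwy, inner_sub_right, real_inner_smul_right] at hlow
  rw [hwx, inner_neg_right, real_inner_smul_right, norm_neg, norm_smul, Real.norm_of_nonneg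
    (inv_nonneg.2 hK.le)] at hup
  have hv : ⟪g x, v⟫ - ⟪g y, v⟫ = ‖v‖ ^ 2 := by
    rw [← inner_sub_left, real_inner_self_eq_norm_sq]
  have hquad : K / 2 * (K⁻¹ * ‖v‖) ^ 2 = K⁻¹ * ‖v‖ ^ 2 - ‖v‖ ^ 2 / (2 * K) := by
    field_simp; ring
  linear_combination hlow + hup - K⁻¹ * hv + hquad

section Gradient

variable [CompleteSpace E]

theorem hasGradientAt_half_mul_norm_sq (μ : ℝ) (x : E) :
    HasGradientAt (fun y : E => μ / 2 * ‖y‖ ^ 2) (μ • x) x := by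
  rw [hasGradientAt_iff_hasFDerivAt]
  refine ((hasStrictFDerivAt_norm_sq x).hasFDerivAt.const_mul (μ / 2)).congr_fderiv ?_
  ext y
  simp [InnerProductSpace.toDual_apply_apply]
  ring

theorem HasGradientAt.hasDerivAt_comp_smul_add {h : E → ℝ} {g d x : E} {t : ℝ}
    (hg : HasGradientAt h g (t • d + x)) :
    HasDerivAt (fun s : ℝ => h (s • d + x)) ⟪g, d⟫ t := by
  have hline : HasDerivAt (fun s : ℝ => s • d + x) d t := by
    simpa using ((hasDerivAt_id t).smul_const d).add_const x
  simpa [Function.comp_def, InnerProductSpace.toDual_apply_apply] using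
    hg.hasFDerivAt.comp_hasDerivAt t hline

theorem ConvexOn.add_inner_le_of_hasGradientAt {h : E → ℝ} (hconv : ConvexOn ℝ univ h) {g x : E}
    (hg : HasGradientAt h g x) (y : E) : h x + ⟪g, y - x⟫ ≤ h y := by
  have hline : ConvexOn ℝ univ fun s : ℝ => h (s • (y - x) + x) := by
    simpa [Function.comp_def, AffineMap.lineMap_apply_module'] using
      hconv.comp_affineMap (AffineMap.lineMap x y)
  have hslope := hline.le_slope_of_hasDerivAt (mem_univ 0) (mem_univ 1) zero_lt_one
    (HasGradientAt.hasDerivAt_comp_smul_add (by simpa using hg))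
  simp only [slope_def_field, one_smul, sub_add_cancel, zero_smul, zero_add, sub_zero, div_one]
    at hslope
  linarith

theorem le_add_inner_add_half_mul_norm_sq {h : E → ℝ} {g : E → E} {K : ℝ}
    (hg : ∀ x, HasGradientAt h (g x) x) (hlip : ∀ x y, ‖g x - g y‖ ≤ K * ‖x - y‖) (x y : E) :
    h y ≤ h x + ⟪g x, y - x⟫ + K / 2 * ‖y - x‖ ^ 2 := by
  set d := y - x
  set φ : ℝ → ℝ := fun t => h (t • d + x) - t * ⟪g x, d⟫ - K / 2 * t ^ 2 * ‖d‖ ^ 2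
  have hφ : ∀ t, HasDerivAt φ (⟪g (t • d + x), d⟫ - ⟪g x, d⟫ - K * t * ‖d‖ ^ 2) t := by
    intro t
    refine ((((hg (t • d + x)).hasDerivAt_comp_smul_add).sub
      ((hasDerivAt_id t).mul_const ⟪g x, d⟫)).sub
      (((hasDerivAt_pow 2 t).const_mul (K / 2)).mul_const (‖d‖ ^ 2))).congr_deriv ?_
    simp only [Nat.cast_ofNat]; ring
  have hφ' : ∀ t ∈ interior (Ici (0 : ℝ)),
      ⟪g (t • d + x), d⟫ - ⟪g x, d⟫ - K * t * ‖d‖ ^ 2 ≤ 0 := by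
    intro t ht
    rw [interior_Ici] at ht
    calc ⟪g (t • d + x), d⟫ - ⟪g x, d⟫ - K * t * ‖d‖ ^ 2
        = ⟪g (t • d + x) - g x, d⟫ - K * t * ‖d‖ ^ 2 := by rw [inner_sub_left]
      _ ≤ ‖g (t • d + x) - g x‖ * ‖d‖ - K * t * ‖d‖ ^ 2 := by
        gcongr; exact real_inner_le_norm _ _
      _ ≤ K * ‖t • d + x - x‖ * ‖d‖ - K * t * ‖d‖ ^ 2 := by
        gcongr; exact hlip _ _
      _ = 0 := by
        rw [add_sub_cancel_right, norm_smul, Real.norm_of_nonneg (le_of_lt ht)]; ring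
  have hanti : AntitoneOn φ (Ici 0) :=
    antitoneOn_of_hasDerivWithinAt_nonpos (convex_Ici 0)
      (fun t _ => (hφ t).continuousAt.continuousWithinAt) (fun t _ => (hφ t).hasDerivWithinAt) hφ'
  have h10 : φ 1 ≤ φ 0 := hanti self_mem_Ici (mem_Ici.2 zero_le_one) zero_le_one
  have hφ1 : φ 1 = h y - ⟪g x, d⟫ - K / 2 * ‖d‖ ^ 2 := by simp [φ, d]
  have hφ0 : φ 0 = h x := by simp [φ]
  linarith

theorem norm_sq_div_add_le_of_stronglyConvex_of_lipschitz {f : E → ℝ} {g : E → E} {μ L : ℝ}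
    (hμL : μ < L) (hg : ∀ x, HasGradientAt f (g x) x)
    (hconv : ConvexOn ℝ univ fun x => f x - μ / 2 * ‖x‖ ^ 2)
    (hlip : ∀ x y, ‖g x - g y‖ ≤ L * ‖x - y‖) (x y : E) :
    ‖g x - g y - μ • (x - y)‖ ^ 2 / (2 * (L - μ)) + μ / 2 * ‖x - y‖ ^ 2 ≤
      f x - f y - ⟪g y, x - y⟫ := by
  set h : E → ℝ := fun x => f x - μ / 2 * ‖x‖ ^ 2
  have hbregman : ∀ x y, h y - h x - ⟪g x - μ • x, y - x⟫ =
      f y - f x - ⟪g x, y - x⟫ - μ / 2 * ‖y - x‖ ^ 2 := fun x y => by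
    rw [← half_mul_norm_sq_sub_sub_inner μ x y, inner_sub_left]; ring
  have hgh : ∀ x, HasGradientAt h (g x - μ • x) x := fun x => by
    rw [hasGradientAt_iff_hasFDerivAt, map_sub]
    exact (hg x).hasFDerivAt.sub (hasGradientAt_half_mul_norm_sq μ x).hasFDerivAt
  have hlow : ∀ x y, h x + ⟪g x - μ • x, y - x⟫ ≤ h y := fun x y =>
    hconv.add_inner_le_of_hasGradientAt (hgh x) y
  have hup : ∀ x y, h y ≤ h x + ⟪g x - μ • x, y - x⟫ + (L - μ) / 2 * ‖y - x‖ ^ 2 := fun x y => by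
    linarith [hbregman x y, le_add_inner_add_half_mul_norm_sq hg hlip x y]
  have key := norm_sq_div_two_mul_le_of_convex_of_descent (sub_pos.2 hμL) hlow hup x y
  rw [show g x - μ • x - (g y - μ • y) = g x - g y - μ • (x - y) by rw [smul_sub]; abel] at key
  linarith [hbregman y x]

end Gradient

theorem stmt16 {n : ℕ} (μ L : ℝ) (hμ : 0 < μ) (hμL : μ < L)
    (f : EuclideanSpace ℝ (Fin n) → ℝ) (hf : SmoothStronglyConvex μ L f)
    (x y : EuclideanSpace ℝ (Fin n)) :
    f x - f y - ⟪gradient f y, x - y⟫ ≥ 1 / (2 * (1 - μ / L)) *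
      ((1 / L) * ‖gradient f x - gradient f y‖ ^ 2 + μ * ‖x - y‖ ^ 2 -
        (2 * μ / L) * ⟪gradient f y - gradient f x, y - x⟫) := by
  obtain ⟨hC1, hconv, hlip⟩ := hf
  have hg : ∀ x, HasGradientAt f (gradient f x) x := fun x =>
    (hC1.differentiable one_ne_zero x).hasGradientAt
  have key := norm_sq_div_add_le_of_stronglyConvex_of_lipschitz hμL hg hconv hlip x y
  set u := gradient f x - gradient f y
  set d := x - y
  have hexpand : ‖u - μ • d‖ ^ 2 = ‖u‖ ^ 2 - 2 * μ * ⟪u, d⟫ + μ ^ 2 * ‖d‖ ^ 2 := by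
    rw [norm_sub_sq_real, real_inner_smul_right, norm_smul, Real.norm_of_nonneg hμ.le]; ring
  have hsymm : ⟪gradient f y - gradient f x, y - x⟫ = ⟪u, d⟫ := by
    rw [← neg_sub x y, ← neg_sub (gradient f x), inner_neg_neg]
  have hL : L ≠ 0 := (hμ.trans hμL).ne'
  have hLμ : L - μ ≠ 0 := (sub_pos.2 hμL).ne'
  have hrhs : 1 / (2 * (1 - μ / L)) * ((1 / L) * ‖u‖ ^ 2 + μ * ‖d‖ ^ 2 - (2 * μ / L) * ⟪u, d⟫) =
      ‖u - μ • d‖ ^ 2 / (2 * (L - μ)) + μ / 2 * ‖d‖ ^ 2 := by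
    rw [hexpand, one_sub_div hL]; field_simp; ring
  rw [hsymm, hrhs]
  exact key
end
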